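/- With parameter m = 1000, for all sufficiently large n one has π(G_n) < π(H_n). -/

import Mathlib

/-!
On `G_n`, whose path has `L = ⌊log₂ n⌋` vertices, every configuration of `10 n` pebbles is
solvable. If the clique holds at least `4·2^L + n` pebbles, pooling them onto the vertex joined
to the path leaves `2^(L+1)` pebbles there, enough to reach any vertex. Otherwise the path holds
more than `∑ⱼ 2^d(j, v)` pebbles, so some path vertex `j` carries `2^d(j, v)` of them.

On `H_n`, for a height function `h` rising by at most one along each edge, no pebbling move
increases the potential `∑ C w * 2^h(w)`. Taking `h` to climb from `0` at the free end of one
path to `2L'` at the free end of the other, fewer than `4^L'` pebbles on the first end never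
reach the second. Finally `4^L' > n·4^(m-1) ≥ 10 n` once `m ≥ 3`.
-/

open Finset

/-- A single pebbling move on `G`: remove two pebbles from a vertex `u` with at least
two pebbles and add one pebble to a vertex `v` adjacent to `u`. -/
def PebblingMove {V : Type*} [DecidableEq V] (G : SimpleGraph V) (C C' : V → ℕ) : Prop :=
  ∃ u v : V, G.Adj u v ∧ 2 ≤ C u ∧
    C' = fun w => if w = u then C u - 2 else if w = v then C v + 1 else C w

/-- A configuration is solvable if every vertex can receive a pebble after finitely
many pebbling moves. -/
def Solvable {V : Type*} [DecidableEq V] (G : SimpleGraph V) (C : V → ℕ) : Prop :=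
  ∀ v : V, ∃ C' : V → ℕ, Relation.ReflTransGen (PebblingMove G) C C' ∧ 1 ≤ C' v

/-- The pebbling number `π(G)`: the least `t` such that every configuration of size `t`
is solvable. -/
noncomputable def pebblingNumber {V : Type*} [Fintype V] [DecidableEq V]
    (G : SimpleGraph V) : ℕ :=
  sInf {t : ℕ | ∀ C : V → ℕ, (∑ v, C v) = t → Solvable G C}

/-- The finset of all configurations of `t` pebbles on `n` vertices. -/
def configs (n t : ℕ) : Finset (Fin n → ℕ) :=
  (Fintype.piFinset fun _ : Fin n => Finset.range (t + 1)).filter fun C => ∑ i, C i = t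

open scoped Classical in
/-- `P(G; t)`: the proportion of solvable configurations among all `C(n+t-1, t)`
configurations of size `t`. -/
noncomputable def solvableProportion (n : ℕ) (G : SimpleGraph (Fin n)) (t : ℕ) : ℝ :=
  (((configs n t).filter fun C => Solvable G C).card : ℝ) / (Nat.choose (n + t - 1) t : ℝ)

/-- `τ_α(G)`: the least `t` with `P(G;t) ≥ α`. -/
noncomputable def tauAlpha (n : ℕ) (G : SimpleGraph (Fin n)) (α : ℝ) : ℕ :=
  sInf {t : ℕ | α ≤ solvableProportion n G t}

/-- A path on vertices `0, …, L-1` whose endpoint `L-1` is joined by an edge to vertex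
`L` of the clique on vertices `L, …, n-1`. -/
def pathClique (n L : ℕ) : SimpleGraph (Fin n) :=
  SimpleGraph.fromRel fun i j =>
    (j.val = i.val + 1 ∧ j.val ≤ L) ∨ (L ≤ i.val ∧ L ≤ j.val)

/-- `G_n`: a path with `⌊log₂ n⌋` vertices attached to a clique on the remaining vertices. -/
def Ggraph (n : ℕ) : SimpleGraph (Fin n) := pathClique n (Nat.log 2 n)

/-- Two disjoint paths on `0, …, L-1` and `L, …, 2L-1`, whose endpoints `L-1` and `2L-1`
are each joined by an edge to vertex `2L` of the clique on vertices `2L, …, n-1`. -/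
def twoPathClique (n L : ℕ) : SimpleGraph (Fin n) :=
  SimpleGraph.fromRel fun i j =>
    (j.val = i.val + 1 ∧ j.val < L) ∨
    (L ≤ i.val ∧ j.val = i.val + 1 ∧ j.val < 2 * L) ∨
    (2 * L ≤ i.val ∧ 2 * L ≤ j.val) ∨
    (i.val + 1 = L ∧ j.val = 2 * L) ∨
    (i.val + 1 = 2 * L ∧ j.val = 2 * L)

/-- `L' = ⌊(1/2)·log₂ n + m⌋`. -/
noncomputable def Lp (n m : ℕ) : ℕ := ⌊Real.logb 2 n / 2 + m⌋₊

/-- `H_n` with parameter `m`: two paths with `L'` vertices each, attached to a clique on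
the remaining `n - 2L'` vertices. -/
noncomputable def Hgraph (n m : ℕ) : SimpleGraph (Fin n) := twoPathClique n (Lp n m)

section Pebbling

variable {V : Type*} [DecidableEq V] {G : SimpleGraph V}

theorem reflTransGen_pebblingMove_repeat {u v : V} (huv : G.Adj u v) (k : ℕ) {C : V → ℕ}
    (hC : 2 * k ≤ C u) :
    Relation.ReflTransGen (PebblingMove G) C
      (fun w => if w = u then C u - 2 * k else if w = v then C v + k else C w) := by
  induction k with
  | zero =>
    convert Relation.ReflTransGen.refl (r := PebblingMove G) (a := C) using 1
    funext w
    split_ifs <;> simp_all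
  | succ k ih =>
    refine (ih (by omega)).tail ⟨u, v, huv, by simp; omega, ?_⟩
    funext w
    by_cases hu : w = u
    · simp [hu]; omega
    · by_cases hv : w = v
      · simp [hv, huv.ne.symm]; omega
      · simp [hu, hv]

theorem exists_reflTransGen_le_of_walk {u v : V} (p : G.Walk u v) {m : ℕ} {C : V → ℕ}
    (hC : m * 2 ^ p.length ≤ C u) :
    ∃ C', Relation.ReflTransGen (PebblingMove G) C C' ∧ m ≤ C' v := by
  induction p generalizing C with
  | nil => exact ⟨C, .refl, by simpa using hC⟩
  | @cons a b _ hab p ih =>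
    rw [SimpleGraph.Walk.length_cons, pow_succ] at hC
    obtain ⟨C', hC', hm⟩ := ih (C := fun w => if w = a then C a - 2 * (m * 2 ^ p.length)
      else if w = b then C b + m * 2 ^ p.length else C w) (by simp [hab.ne.symm])
    exact ⟨C', (reflTransGen_pebblingMove_repeat hab _ (by linarith)).trans hC', hm⟩

/-- Each neighbour `u ∈ S` sends `⌊C u / 2⌋` pebbles to `v`. -/
theorem exists_reflTransGen_sum_le {v : V} {S : Finset V} (hv : v ∉ S)
    (hS : ∀ u ∈ S, G.Adj u v) (C : V → ℕ) :
    ∃ C', Relation.ReflTransGen (PebblingMove G) C C' ∧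
      2 * C v + ∑ u ∈ S, C u ≤ 2 * C' v + S.card := by
  induction S using Finset.induction generalizing C with
  | empty => exact ⟨C, .refl, by simp⟩
  | @insert a S ha ih =>
    have hvS : v ∉ S := fun h => hv (mem_insert_of_mem h)
    have hav := hS a (mem_insert_self a S)
    have hva : v ≠ a := fun h => hv (h ▸ mem_insert_self a S)
    obtain ⟨C', hC', hle⟩ := ih hvS
      (fun u hu => hS u (mem_insert_of_mem hu))
      (fun w => if w = a then C a - 2 * (C a / 2) else if w = v then C v + C a / 2 else C w)
    have hsum : ∑ u ∈ S, (if u = a then C a - 2 * (C a / 2)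
        else if u = v then C v + C a / 2 else C u) = ∑ u ∈ S, C u :=
      sum_congr rfl fun u hu => by
        rw [if_neg (ne_of_mem_of_not_mem hu ha), if_neg (ne_of_mem_of_not_mem hu hvS)]
    simp only [hsum, hva, if_false, if_true] at hle
    refine ⟨C', (reflTransGen_pebblingMove_repeat hav _ (Nat.mul_div_le _ _)).trans hC', ?_⟩
    rw [sum_insert ha, card_insert_of_notMem ha]
    omega

theorem exists_reflTransGen_of_sum_two_pow_lt {v : V} {S : Finset V} (d : V → ℕ)
    (hd : ∀ u ∈ S, ∃ p : G.Walk u v, p.length ≤ d u) {C : V → ℕ}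
    (hC : ∑ u ∈ S, 2 ^ d u < ∑ u ∈ S, C u) :
    ∃ C', Relation.ReflTransGen (PebblingMove G) C C' ∧ 1 ≤ C' v := by
  obtain ⟨u, hu, hlt⟩ := exists_lt_of_sum_lt hC
  obtain ⟨p, hp⟩ := hd u hu
  exact exists_reflTransGen_le_of_walk p
    (by rw [one_mul]; exact (Nat.pow_le_pow_right two_pos hp).trans hlt.le)

variable [Fintype V]

theorem PebblingMove.sum_mul_le {g : V → ℕ} (hg : ∀ u v, G.Adj u v → g v ≤ 2 * g u)
    {C C' : V → ℕ} (h : PebblingMove G C C') : ∑ w, C' w * g w ≤ ∑ w, C w * g w := by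
  obtain ⟨u, v, huv, hu, hC'⟩ := h
  have hpoint : ∀ w, C' w * g w + (if w = u then 2 * g u else 0) =
      C w * g w + if w = v then g v else 0 := by
    intro w
    subst hC'
    by_cases hwu : w = u
    · subst hwu
      simp only [huv.ne, if_true, if_false, Nat.sub_mul]
      have := Nat.mul_le_mul_right (g w) hu
      omega
    · by_cases hwv : w = v <;> simp [hwu, hwv, huv.ne', add_mul]
  have key := sum_congr rfl fun w (_ : w ∈ univ) => hpoint w
  simp only [sum_add_distrib, sum_ite_eq', mem_univ, if_true] at key
  have := hg u v huv
  omega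

theorem sum_mul_le_of_reflTransGen {g : V → ℕ} (hg : ∀ u v, G.Adj u v → g v ≤ 2 * g u)
    {C C' : V → ℕ} (h : Relation.ReflTransGen (PebblingMove G) C C') :
    ∑ w, C' w * g w ≤ ∑ w, C w * g w := by
  induction h with
  | refl => exact le_rfl
  | tail _ hmove ih => exact (hmove.sum_mul_le hg).trans ih

theorem not_solvable_pi_single (f : V → ℕ) (hf : ∀ u v, G.Adj u v → f v ≤ f u + 1)
    {x r : V} {s : ℕ} (hs : s * 2 ^ f x < 2 ^ f r) : ¬ Solvable G (Pi.single x s) := by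
  intro hsolv
  obtain ⟨C', hC', hr⟩ := hsolv r
  have hg : ∀ u v, G.Adj u v → 2 ^ f v ≤ 2 * 2 ^ f u := fun u v huv => by
    rw [← pow_succ']; exact Nat.pow_le_pow_right two_pos (hf u v huv)
  have hmono := sum_mul_le_of_reflTransGen hg hC'
  have hstart : ∑ w, Pi.single x s w * 2 ^ f w = s * 2 ^ f x := by
    simp [Pi.single_apply]
  have hend : 2 ^ f r ≤ ∑ w, C' w * 2 ^ f w :=
    (Nat.le_mul_of_pos_left _ hr).trans
      (single_le_sum (f := fun w => C' w * 2 ^ f w) (fun _ _ => Nat.zero_le _)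
        (mem_univ r))
  omega

theorem exists_forall_solvable_of_connected (hG : G.Connected) :
    ∃ t, ∀ C : V → ℕ, ∑ v, C v = t → Solvable G C := by
  have := hG.nonempty
  refine ⟨Fintype.card V * 2 ^ Fintype.card V, fun C hC v => ?_⟩
  obtain ⟨u, -, hu⟩ := exists_le_of_sum_le univ_nonempty
    (f := fun _ => 2 ^ Fintype.card V) (g := C) (by simp [hC])
  let p := (hG u v).some.toPath
  exact exists_reflTransGen_le_of_walk p.1 (by
    rw [one_mul]; exact (Nat.pow_le_pow_right two_pos p.2.length_lt.le).trans hu)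

theorem pebblingNumber_le {t : ℕ} (h : ∀ C : V → ℕ, ∑ v, C v = t → Solvable G C) :
    pebblingNumber G ≤ t :=
  Nat.sInf_le h

theorem le_pebblingNumber (hG : G.Connected) {b : ℕ}
    (h : ∀ t < b, ∃ C : V → ℕ, ∑ v, C v = t ∧ ¬ Solvable G C) :
    b ≤ pebblingNumber G := by
  by_contra! hlt
  obtain ⟨C, hC, hns⟩ := h _ hlt
  exact hns (Nat.sInf_mem (exists_forall_solvable_of_connected hG) C hC)

end Pebbling

theorem SimpleGraph.exists_walk_length_eq_of_adj_succ {n : ℕ} {G : SimpleGraph (Fin n)}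
    {a b : ℕ} (hab : a ≤ b) (hb : b < n)
    (h : ∀ j (hj : j < b), a ≤ j → G.Adj ⟨j, by omega⟩ ⟨j + 1, by omega⟩) :
    ∃ p : G.Walk ⟨a, by omega⟩ ⟨b, hb⟩, p.length = b - a := by
  induction b with
  | zero =>
    obtain rfl : a = 0 := by omega
    exact ⟨.nil, rfl⟩
  | succ b ih =>
    rcases hab.lt_or_eq with hab | rfl
    · obtain ⟨p, hp⟩ := ih (by omega) (by omega) fun j hj => h j (by omega)
      refine ⟨p.concat (h b (by omega) (by omega)), ?_⟩
      rw [SimpleGraph.Walk.length_concat]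
      omega
    · exact ⟨.nil, by simp⟩

theorem sum_range_two_pow_dist_lt (L k : ℕ) :
    ∑ j ∈ range L, 2 ^ Nat.dist j k < 2 ^ (k + 1) + 2 ^ L := by
  suffices ∑ j ∈ range L, 2 ^ Nat.dist j k + 2 ^ (k + 1 - L) < 2 ^ (k + 1) + 2 ^ L by
    have := Nat.one_le_two_pow (n := k + 1 - L)
    omega
  induction L with
  | zero => simp
  | succ L ih =>
    rw [sum_range_succ, pow_succ 2 L]
    rcases le_or_gt L k with hLk | hkL
    · rw [show Nat.dist L k = k - L by unfold Nat.dist; omega,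
        show k + 1 - (L + 1) = k - L by omega]
      rw [show k + 1 - L = k - L + 1 by omega, pow_succ] at ih
      omega
    · rw [show Nat.dist L k = L - k by unfold Nat.dist; omega,
        show k + 1 - (L + 1) = 0 by omega]
      rw [show k + 1 - L = 0 by omega] at ih
      have : 2 ^ (L - k) ≤ 2 ^ L := Nat.pow_le_pow_right two_pos (Nat.sub_le L k)
      omega

section PathClique

variable {n L : ℕ}

theorem pathClique_adj_succ (hLn : L < n) {j : ℕ} (hj : j < L) :
    (pathClique n L).Adj ⟨j, by omega⟩ ⟨j + 1, by omega⟩ := by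
  simp [pathClique, hj]

theorem pathClique_adj_of_le {u v : Fin n} (huv : u ≠ v) (hu : L ≤ (u : ℕ))
    (hv : L ≤ (v : ℕ)) : (pathClique n L).Adj u v := by
  simp [pathClique, huv, hu, hv]

theorem pathClique_exists_walk_length_le (hLn : L < n) {j : Fin n} (hj : (j : ℕ) ≤ L)
    (v : Fin n) :
    ∃ p : (pathClique n L).Walk j v, p.length ≤ Nat.dist j (min v (L + 1)) := by
  have chain := fun {a b : ℕ} (hab : a ≤ b) (hb : b ≤ L) =>
    SimpleGraph.exists_walk_length_eq_of_adj_succ (G := pathClique n L) hab (by omega)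
      fun i hi _ => pathClique_adj_succ hLn (by omega)
  rcases le_or_gt (v : ℕ) L with hvL | hLv
  · rw [min_eq_left (by omega)]
    rcases le_total (j : ℕ) v with hjv | hvj
    · obtain ⟨p, hp⟩ := chain hjv hvL
      exact ⟨p, by rw [hp, Nat.dist_eq_sub_of_le hjv]⟩
    · obtain ⟨p, hp⟩ := chain hvj hj
      exact ⟨p.reverse, by rw [SimpleGraph.Walk.length_reverse, hp, Nat.dist_comm,
        Nat.dist_eq_sub_of_le hvj]⟩
  · obtain ⟨p, hp⟩ := chain hj le_rfl
    have hadj : (pathClique n L).Adj ⟨L, hLn⟩ v :=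
      pathClique_adj_of_le (Fin.ne_of_val_ne (by simp; omega)) le_rfl hLv.le
    refine ⟨p.concat hadj, ?_⟩
    rw [SimpleGraph.Walk.length_concat, hp, min_eq_right hLv, Nat.dist_eq_sub_of_le (by omega)]
    omega

theorem pathClique_solvable (hLn : L < n) {C : Fin n → ℕ} (hC : 9 * 2 ^ L + n ≤ ∑ v, C v) :
    Solvable (pathClique n L) C := by
  intro v
  set hub : Fin n := ⟨L, hLn⟩
  set P := univ.filter fun i : Fin n => (i : ℕ) < L
  set K := univ.filter fun i : Fin n => ¬ (i : ℕ) < L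
  have hsplit : ∑ i ∈ P, C i + ∑ i ∈ K, C i = ∑ v, C v :=
    sum_filter_add_sum_filter_not _ _ _
  by_cases hK : 4 * 2 ^ L + n ≤ ∑ i ∈ K, C i
  · have hhub : hub ∈ K := by simp [K, hub]
    obtain ⟨C₁, hC₁, hpool⟩ := exists_reflTransGen_sum_le (notMem_erase hub K)
      (fun u hu => pathClique_adj_of_le (ne_of_mem_erase hu)
        (not_lt.mp (mem_filter.mp (mem_of_mem_erase hu)).2) le_rfl) C
    have hcard : (K.erase hub).card ≤ n := (card_le_univ _).trans (by simp)
    have := add_sum_erase K C hhub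
    obtain ⟨p, hp⟩ := pathClique_exists_walk_length_le hLn (j := hub) le_rfl v
    have hlen : p.length ≤ L + 1 := hp.trans (by simp only [hub, Nat.dist]; omega)
    obtain ⟨C₂, hC₂, h1⟩ := exists_reflTransGen_le_of_walk p (m := 1) (C := C₁) (by
      have : 2 ^ p.length ≤ 2 * 2 ^ L :=
        (Nat.pow_le_pow_right two_pos hlen).trans_eq (pow_succ' 2 L)
      omega)
    exact ⟨C₂, hC₁.trans hC₂, h1⟩
  · set k := min (v : ℕ) (L + 1)
    refine exists_reflTransGen_of_sum_two_pow_lt (S := P) (fun j => Nat.dist j k)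
      (fun j hj => pathClique_exists_walk_length_le hLn (by simp [P] at hj; omega) v) ?_
    calc ∑ j ∈ P, 2 ^ Nat.dist j k
        = ∑ j ∈ P.map Fin.valEmbedding, 2 ^ Nat.dist j k :=
          (sum_map P Fin.valEmbedding fun j => 2 ^ Nat.dist j k).symm
      _ ≤ ∑ j ∈ range L, 2 ^ Nat.dist j k :=
          sum_le_sum_of_subset fun j => by simp [P]; omega
      _ < 2 ^ (k + 1) + 2 ^ L := sum_range_two_pow_dist_lt L k
      _ ≤ 5 * 2 ^ L := by
          have : 2 ^ (k + 1) ≤ 4 * 2 ^ L :=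
            (Nat.pow_le_pow_right two_pos (by omega : k + 1 ≤ L + 2)).trans_eq (by ring)
          omega
      _ < ∑ j ∈ P, C j := by omega

theorem pebblingNumber_Ggraph_le (hn : n ≠ 0) : pebblingNumber (Ggraph n) ≤ 10 * n := by
  have hpow : 2 ^ Nat.log 2 n ≤ n := Nat.pow_log_le_self 2 hn
  exact pebblingNumber_le fun C hC =>
    pathClique_solvable (Nat.lt_two_pow_self.trans_le hpow) (by omega)

end PathClique

section TwoPathClique

variable {n L : ℕ}

theorem twoPathClique_adj_mk {i j : ℕ} (hi : i < n) (hj : j < n) (hij : i ≠ j)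
    (hrel : (j = i + 1 ∧ j < L) ∨ (L ≤ i ∧ j = i + 1 ∧ j < 2 * L) ∨
      (2 * L ≤ i ∧ 2 * L ≤ j) ∨ (i + 1 = L ∧ j = 2 * L) ∨
      (i + 1 = 2 * L ∧ j = 2 * L)) :
    (twoPathClique n L).Adj ⟨i, hi⟩ ⟨j, hj⟩ :=
  (SimpleGraph.fromRel_adj _ _ _).mpr ⟨Fin.ne_of_val_ne hij, Or.inl hrel⟩

theorem twoPathClique_connected (h : 2 * L < n) : (twoPathClique n L).Connected := by
  have chain := fun {a b : ℕ} (hab : a ≤ b) (hb : b < n)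
      (hstep : ∀ j, a ≤ j → j < b → (j + 1 < L ∨ (L ≤ j ∧ j + 1 < 2 * L))) =>
    (SimpleGraph.exists_walk_length_eq_of_adj_succ (G := twoPathClique n L) hab hb
      fun j hj hja => twoPathClique_adj_mk _ _ (by omega) (by have := hstep j hja hj; omega)
      ).elim fun p _ => p.reachable
  rw [SimpleGraph.connected_iff_exists_forall_reachable]
  refine ⟨⟨2 * L, h⟩, fun ⟨x, hx⟩ => ?_⟩
  refine SimpleGraph.Reachable.symm ?_
  by_cases hx1 : x < L
  · exact (chain (b := L - 1) (by omega) (by omega) fun j _ _ => by omega).trans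
      (twoPathClique_adj_mk _ h (by omega) (by omega)).reachable
  by_cases hx2 : x < 2 * L
  · exact (chain (b := 2 * L - 1) (by omega) (by omega) fun j _ _ => by omega).trans
      (twoPathClique_adj_mk _ h (by omega) (by omega)).reachable
  by_cases hxh : x = 2 * L
  · subst hxh; rfl
  · exact (twoPathClique_adj_mk hx h hxh (by omega)).reachable

theorem twoPathClique_not_solvable_pi_single (h : 2 * L < n) {s : ℕ} (hs : s < 4 ^ L) :
    ¬ Solvable (twoPathClique n L) (Pi.single ⟨0, by omega⟩ s) := by
  let f : Fin n → ℕ := fun i =>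
    if (i : ℕ) < L then i else if (i : ℕ) < 2 * L then 3 * L - i else L
  refine not_solvable_pi_single f (fun u v huv => ?_) (r := ⟨L, by omega⟩) ?_
  · simp only [twoPathClique, SimpleGraph.fromRel_adj] at huv
    simp only [f]
    split_ifs <;> omega
  · have h0 : f ⟨0, by omega⟩ = 0 := by simp only [f]; split_ifs <;> omega
    have hL : f ⟨L, by omega⟩ = 2 * L := by simp only [f]; split_ifs <;> omega
    rwa [h0, hL, pow_zero, mul_one, pow_mul]

theorem four_pow_le_pebblingNumber_twoPathClique (h : 2 * L < n) :
    4 ^ L ≤ pebblingNumber (twoPathClique n L) :=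
  le_pebblingNumber (twoPathClique_connected h) fun t ht =>
    ⟨Pi.single ⟨0, by omega⟩ t, by simp, twoPathClique_not_solvable_pi_single h ht⟩

end TwoPathClique

theorem Lp_le_log_add (n m : ℕ) : Lp n m ≤ Nat.log 2 n + m := by
  have hlog : Real.logb 2 n < Nat.log 2 n + 1 := by
    rcases Nat.eq_zero_or_pos n with rfl | hn
    · simp
    rw [Real.logb_lt_iff_lt_rpow one_lt_two (by exact_mod_cast hn)]
    exact_mod_cast Nat.lt_pow_succ_log_self one_lt_two n
  have : Lp n m < Nat.log 2 n + m + 1 := by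
    rw [Lp, Nat.floor_lt' (by omega)]
    push_cast
    linarith [(Nat.log 2 n).cast_nonneg (α := ℝ)]
  omega

theorem lt_four_pow_Lp_succ {n : ℕ} (hn : n ≠ 0) (m : ℕ) : n * 4 ^ m < 4 ^ (Lp n m + 1) := by
  have hfloor : Real.logb 2 n / 2 + m < Lp n m + 1 := Nat.lt_floor_add_one _
  have : (n : ℝ) * 4 ^ m < 4 ^ (Lp n m + 1) := by
    calc (n : ℝ) * 4 ^ m = (2 : ℝ) ^ (Real.logb 2 n + 2 * m) := by
          rw [Real.rpow_add two_pos, Real.rpow_logb two_pos (by norm_num)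
            (by exact_mod_cast Nat.pos_of_ne_zero hn), Real.rpow_mul two_pos.le]
          norm_num
      _ < (2 : ℝ) ^ ((2 * (Lp n m + 1) : ℕ) : ℝ) :=
          Real.rpow_lt_rpow_of_exponent_lt one_lt_two (by push_cast; linarith)
      _ = 4 ^ (Lp n m + 1) := by rw [Real.rpow_natCast, pow_mul]; norm_num
  exact_mod_cast this

theorem two_mul_add_lt_two_pow {L m : ℕ} (h : m + 4 ≤ L) : 2 * (L + m) < 2 ^ L := by
  induction L, h using Nat.le_induction with
  | base =>
    have := Nat.lt_two_pow_self (n := m)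
    rw [pow_add]
    omega
  | succ L _ ih =>
    rw [pow_succ]
    omega

theorem pebblingNumber_Ggraph_lt_Hgraph_of_two_pow_le {m n : ℕ} (hm : 3 ≤ m)
    (hn : 2 ^ (m + 4) ≤ n) :
    pebblingNumber (Ggraph n) < pebblingNumber (Hgraph n m) := by
  have hn0 : n ≠ 0 := Nat.one_le_iff_ne_zero.mp (Nat.one_le_two_pow.trans hn)
  have hsize : 2 * Lp n m < n :=
    calc 2 * Lp n m ≤ 2 * (Nat.log 2 n + m) := by gcongr; exact Lp_le_log_add n m
      _ < 2 ^ Nat.log 2 n := two_mul_add_lt_two_pow (Nat.le_log_of_pow_le one_lt_two hn)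
      _ ≤ n := Nat.pow_log_le_self 2 hn0
  have hkey : 10 * n < 4 ^ Lp n m := by
    have h1 := lt_four_pow_Lp_succ hn0 m
    have h2 : n * 4 ^ 3 ≤ n * 4 ^ m :=
      Nat.mul_le_mul_left n (Nat.pow_le_pow_right (by norm_num) hm)
    rw [pow_succ] at h1
    omega
  calc pebblingNumber (Ggraph n) ≤ 10 * n := pebblingNumber_Ggraph_le hn0
    _ < 4 ^ Lp n m := hkey
    _ ≤ pebblingNumber (Hgraph n m) := four_pow_le_pebblingNumber_twoPathClique hsize

/-- With `m = 1000`, for all sufficiently large `n`, `π(G_n) < π(H_n)`. -/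
theorem pebblingNumber_Ggraph_lt_Hgraph : ∃ N : ℕ, ∀ n : ℕ, N ≤ n →
    pebblingNumber (Ggraph n) < pebblingNumber (Hgraph n 1000) :=
  ⟨2 ^ (1000 + 4), fun _ hn => pebblingNumber_Ggraph_lt_Hgraph_of_two_pow_le (by norm_num) hn⟩
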